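/- arXiv:2509.23940 — 5 statements merged into one kernel-verified Lean document; each statement's English description precedes it below -/
import Mathlib

section
/- Let G be a group, V a nonzero complex vector space, and π an irreducible representation of G on V by ℂ-linear automorphisms such that every ℂ-linear G-equivariant endomorphism of V is a scalar multiple of the identity (Schur's lemma). Let E be a subfield of ℂ and let W ⊆ V be an E-rational structure of (π,V). Let σ be a field automorphism of ℂ fixing E pointwise, and let t : V → V be a σ-linear G-equivariant bijection. Then there exists λ ∈ ℂˣ such that for every finite family z₁,…,z_r ∈ ℂ and v₁,…,v_r ∈ W one has t(z₁v₁ + ⋯ + z_r v_r) = λ·(σ(z₁)v₁ + ⋯ + σ(z_r)v_r). -/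
set_option synthInstance.maxHeartbeats 1000000
set_option maxHeartbeats 1000000

open TensorProduct

/-- The canonical `E`-linear map `ℂ ⊗[E] W → V` sending `c ⊗ w` to `c • w`,
for a subfield `E` of `ℂ` and an `E`-subspace `W` of a complex vector space `V`. -/
noncomputable def canonicalTensorMap (E : Subfield ℂ) {V : Type*} [AddCommGroup V] [Module ℂ V]
    (W : Submodule E V) : ℂ ⊗[E] W →ₗ[E] V :=
  TensorProduct.lift
    { toFun := fun c =>
        { toFun := fun w => c • (w : V)
          map_add' := fun w₁ w₂ => by simp [smul_add]
          map_smul' := fun e w => by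
            simp only [Submodule.coe_smul, RingHom.id_apply]
            rw [smul_comm] }
      map_add' := fun c₁ c₂ => by ext w; simp [add_smul]
      map_smul' := fun e c => by ext w; simp [smul_assoc] }

/-!
Transporting `σ ⊗ id` along the isomorphism `ℂ ⊗[E] W ≅ V` gives a `σ`-linear bijection `s` of `V`
which is the identity on `W` and commutes with `G`, since `G` preserves `W`. Then `t ∘ s⁻¹` is
`ℂ`-linear and `G`-equivariant, hence a scalar `λ` by Schur's lemma, and `λ ≠ 0` because `t` is
injective. So `t (∑ zᵢ vᵢ) = λ • s (∑ zᵢ vᵢ) = λ • ∑ σ(zᵢ) vᵢ`.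
-/

section RationalStructure

variable {E : Subfield ℂ} {V : Type*} [AddCommGroup V] [Module ℂ V] {W : Submodule E V}

@[simp]
theorem canonicalTensorMap_tmul (z : ℂ) (w : W) :
    canonicalTensorMap E W (z ⊗ₜ w) = z • (w : V) :=
  TensorProduct.lift.tmul _ _

theorem induction_of_bijective_canonicalTensorMap (hW : Function.Bijective (canonicalTensorMap E W))
    {p : V → Prop} (zero : p 0) (smul : ∀ (z : ℂ) (w : W), p (z • (w : V)))
    (add : ∀ x y, p x → p y → p (x + y)) (v : V) : p v := by
  obtain ⟨x, rfl⟩ := hW.surjective v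
  induction x using TensorProduct.induction_on with
  | zero => simpa using zero
  | tmul z w => simpa using smul z w
  | add x y hx hy => simpa using add _ _ hx hy

/-- The `σ`-conjugation of `V` with respect to the rational structure `W`:
`∑ zᵢ wᵢ ↦ ∑ σ(zᵢ) wᵢ` for `zᵢ ∈ ℂ`, `wᵢ ∈ W`. -/
noncomputable def rationalConj (hW : Function.Bijective (canonicalTensorMap E W))
    (σ : ℂ ≃ₐ[E] ℂ) : V ≃ₗ[E] V :=
  let e := LinearEquiv.ofBijective _ hW
  e.symm ≪≫ₗ TensorProduct.congr σ.toLinearEquiv (LinearEquiv.refl E W) ≪≫ₗ e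

variable (hW : Function.Bijective (canonicalTensorMap E W)) (σ : ℂ ≃ₐ[E] ℂ)

theorem rationalConj_smul_coe (z : ℂ) (w : W) :
    rationalConj hW σ (z • (w : V)) = σ z • (w : V) := by
  have h : (LinearEquiv.ofBijective _ hW).symm (z • (w : V)) = z ⊗ₜ w :=
    (LinearEquiv.ofBijective _ hW).symm_apply_eq.mpr (canonicalTensorMap_tmul z w).symm
  change LinearEquiv.ofBijective _ hW (TensorProduct.congr σ.toLinearEquiv (LinearEquiv.refl E W)
    ((LinearEquiv.ofBijective _ hW).symm (z • (w : V)))) = _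
  rw [h, TensorProduct.congr_tmul]
  simp

theorem rationalConj_smul (c : ℂ) (v : V) :
    rationalConj hW σ (c • v) = σ c • rationalConj hW σ v := by
  induction v using induction_of_bijective_canonicalTensorMap hW with
  | zero => simp
  | smul z w => rw [smul_smul, rationalConj_smul_coe, rationalConj_smul_coe, map_mul, mul_smul]
  | add x y hx hy => rw [smul_add, map_add, map_add, hx, hy, smul_add]

theorem rationalConj_commute_of_mapsTo (f : V →ₗ[ℂ] V) (hf : ∀ v ∈ W, f v ∈ W) (v : V) :
    rationalConj hW σ (f v) = f (rationalConj hW σ v) := by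
  induction v using induction_of_bijective_canonicalTensorMap hW with
  | zero => simp
  | smul z w =>
    rw [map_smul, rationalConj_smul_coe hW σ z ⟨f w, hf w w.2⟩, rationalConj_smul_coe, map_smul]
  | add x y hx hy => rw [map_add, map_add, hx, hy, map_add, map_add]

end RationalStructure

theorem exists_eq_smul_of_semilinear_equivariant {G V : Type*} [Group G] [AddCommGroup V]
    [Module ℂ V] (π : G →* (V ≃ₗ[ℂ] V))
    (hschur : ∀ f : V →ₗ[ℂ] V, (∀ (g : G) (v : V), f (π g v) = π g (f v)) →
      ∃ c : ℂ, ∀ v : V, f v = c • v)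
    (σ : ℂ ≃+* ℂ) (s : V ≃+ V) (hs_smul : ∀ (c : ℂ) (v : V), s (c • v) = σ c • s v)
    (hs_equiv : ∀ (g : G) (v : V), s (π g v) = π g (s v))
    (t : V → V) (ht_add : ∀ v₁ v₂ : V, t (v₁ + v₂) = t v₁ + t v₂)
    (ht_smul : ∀ (c : ℂ) (v : V), t (c • v) = σ c • t v)
    (ht_equiv : ∀ (g : G) (v : V), t (π g v) = π g (t v)) :
    ∃ c : ℂ, ∀ v : V, t v = c • s v := by
  have hs_symm_smul (c : ℂ) (v : V) : s.symm (c • v) = σ.symm c • s.symm v :=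
    s.symm_apply_eq.mpr (by rw [hs_smul, s.apply_symm_apply, σ.apply_symm_apply])
  have hs_symm_equiv (g : G) (v : V) : s.symm (π g v) = π g (s.symm v) :=
    s.symm_apply_eq.mpr (by rw [hs_equiv, s.apply_symm_apply])
  let f : V →ₗ[ℂ] V :=
    { toFun := fun v => t (s.symm v)
      map_add' := fun a b => by simp only [map_add, ht_add]
      map_smul' := fun c v => by
        simp only [hs_symm_smul, ht_smul, RingEquiv.apply_symm_apply, RingHom.id_apply] }
  obtain ⟨c, hc⟩ := hschur f fun g v => by
    simp only [f, LinearMap.coe_mk, AddHom.coe_mk, hs_symm_equiv, ht_equiv]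
  exact ⟨c, fun v => by simpa [f] using hc (s v)⟩

theorem sigma_linear_map_on_rational_structure_general
    {G V : Type*} [Group G] [AddCommGroup V] [Module ℂ V] [Nontrivial V]
    (π : G →* (V ≃ₗ[ℂ] V))
    (hschur : ∀ f : V →ₗ[ℂ] V, (∀ (g : G) (v : V), f (π g v) = π g (f v)) →
      ∃ c : ℂ, ∀ v : V, f v = c • v)
    (E : Subfield ℂ) (W : Submodule E V)
    (hW_stable : ∀ g : G, ∀ v ∈ W, π g v ∈ W)
    (hW_rat : Function.Bijective (canonicalTensorMap E W))
    (σ : ℂ ≃+* ℂ) (hσ : ∀ e ∈ E, σ e = e)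
    (t : V → V) (ht_bij : Function.Bijective t)
    (ht_add : ∀ v₁ v₂ : V, t (v₁ + v₂) = t v₁ + t v₂)
    (ht_smul : ∀ (c : ℂ) (v : V), t (c • v) = σ c • t v)
    (ht_equiv : ∀ (g : G) (v : V), t (π g v) = π g (t v)) :
    ∃ lam : ℂˣ, ∀ (ι : Type) (s : Finset ι) (z : ι → ℂ) (v : ι → W),
      t (∑ i ∈ s, z i • (v i : V)) = (lam : ℂ) • ∑ i ∈ s, σ (z i) • (v i : V) := by
  let σE : ℂ ≃ₐ[E] ℂ := { σ with commutes' := fun e => hσ e e.2 }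
  let conj := rationalConj hW_rat σE
  obtain ⟨c, hc⟩ := exists_eq_smul_of_semilinear_equivariant π hschur σ conj.toAddEquiv
    (rationalConj_smul hW_rat σE)
    (fun g => rationalConj_commute_of_mapsTo hW_rat σE (π g).toLinearMap (hW_stable g))
    t ht_add ht_smul ht_equiv
  have hc0 : c ≠ 0 := by
    rintro rfl
    obtain ⟨v, hv⟩ := exists_ne (0 : V)
    exact hv (ht_bij.injective (by simp [hc]))
  refine ⟨Units.mk0 c hc0, fun ι s z v => ?_⟩
  rw [hc, Units.val_mk0]
  simp only [LinearEquiv.coe_toAddEquiv, map_sum]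
  exact congrArg _ (Finset.sum_congr rfl fun i _ => rationalConj_smul_coe hW_rat σE (z i) (v i))

/-- Let `π` be an irreducible representation of a group `G` on a nonzero complex vector space
`V` for which Schur's lemma holds, `E` a subfield of `ℂ`, and `W` an `E`-rational structure of
`(π, V)`.  If `σ` is a field automorphism of `ℂ` fixing `E` pointwise and `t : V → V` is a
`σ`-linear `G`-equivariant bijection, then there is `λ ∈ ℂˣ` such that
`t (∑ zᵢ vᵢ) = λ • ∑ σ(zᵢ) vᵢ` for every finite family `zᵢ ∈ ℂ`, `vᵢ ∈ W`. -/
theorem sigma_linear_map_on_rational_structure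
    {G V : Type*} [Group G] [AddCommGroup V] [Module ℂ V] [Nontrivial V]
    (π : G →* (V ≃ₗ[ℂ] V))
    (hirr : ∀ U : Submodule ℂ V, (∀ g : G, ∀ v ∈ U, π g v ∈ U) → U = ⊥ ∨ U = ⊤)
    (hschur : ∀ f : V →ₗ[ℂ] V, (∀ (g : G) (v : V), f (π g v) = π g (f v)) →
      ∃ c : ℂ, ∀ v : V, f v = c • v)
    (E : Subfield ℂ) (W : Submodule E V)
    (hW_stable : ∀ g : G, ∀ v ∈ W, π g v ∈ W)
    (hW_rat : Function.Bijective (canonicalTensorMap E W))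
    (σ : ℂ ≃+* ℂ) (hσ : ∀ e ∈ E, σ e = e)
    (t : V → V) (ht_bij : Function.Bijective t)
    (ht_add : ∀ v₁ v₂ : V, t (v₁ + v₂) = t v₁ + t v₂)
    (ht_smul : ∀ (c : ℂ) (v : V), t (c • v) = σ c • t v)
    (ht_equiv : ∀ (g : G) (v : V), t (π g v) = π g (t v)) :
    ∃ lam : ℂˣ, ∀ (ι : Type) (s : Finset ι) (z : ι → ℂ) (v : ι → W),
      t (∑ i ∈ s, z i • (v i : V)) = (lam : ℂ) • ∑ i ∈ s, σ (z i) • (v i : V) :=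
  sigma_linear_map_on_rational_structure_general π hschur E W hW_stable hW_rat σ hσ t ht_bij ht_add
    ht_smul ht_equiv
end

section
/- Let F be a field of characteristic different from 2, and let c : F → F be a field automorphism with c ∘ c = id. Let δ, x, y ∈ F satisfy c(δ) = -δ and c(y) = -y. Set z = -δy + (1/2)·δ·x·c(x) and assume z ≠ 0. Consider the 3×3 matrices over F: w = [[0,0,-1],[0,1,0],[1,0,0]] and n = [[1, -δx, z],[0,1,-c(x)],[0,0,1]]. Then w · n · w⁻¹ = u₁ · d · w · u₂, where u₁ = [[1, -δx·c(z)⁻¹, -z⁻¹],[0, 1, -c(x)·z⁻¹],[0,0,1]], d = diag(-c(z)⁻¹, z⁻¹·c(z), -z), and u₂ = [[1, δx·z⁻¹, -z⁻¹],[0, 1, c(x)·c(z)⁻¹],[0,0,1]]. -/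
/-!
Conjugating by `w` turns `n` into the lower unitriangular matrix
`!![1, 0, 0; c x, 1, 0; -z, -δ x, 1]`. Its decomposition `u₁ d w u₂` is an identity of
rational functions in `δ x`, `c x`, `z`, `c z` which holds as soon as `z - c z = δ x c(x)`,
and that relation comes from applying `c` to the definition of `z`.
-/

theorem inv_weylMatrix {R : Type*} [CommRing R] :
    (!![0, 0, -1; 0, 1, 0; 1, 0, 0] : Matrix (Fin 3) (Fin 3) R)⁻¹ =
      !![0, 0, 1; 0, 1, 0; -1, 0, 0] :=
  Matrix.inv_eq_right_inv <| by simp [Matrix.one_fin_three]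

theorem weylMatrix_conj_upper_unitriangular {R : Type*} [CommRing R] (a b z : R) :
    !![0, 0, -1; 0, 1, 0; 1, 0, 0] * !![1, a, z; 0, 1, -b; 0, 0, 1] *
        !![0, 0, 1; 0, 1, 0; -1, 0, 0] = !![1, 0, 0; b, 1, 0; -z, a, 1] := by
  simp

theorem lower_unitriangular_eq_bruhat {F : Type*} [Field F] (δ x b z z' : F)
    (hzz' : z - z' = δ * x * b) (hz : z ≠ 0) (hz' : z' ≠ 0) :
    !![1, 0, 0; b, 1, 0; -z, -δ * x, 1] =
      !![1, -δ * x * z'⁻¹, -z⁻¹; 0, 1, -b * z⁻¹; 0, 0, 1] *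
        Matrix.diagonal ![-z'⁻¹, z⁻¹ * z', -z] * !![0, 0, -1; 0, 1, 0; 1, 0, 0] *
        !![1, δ * x * z⁻¹, -z⁻¹; 0, 1, b * z'⁻¹; 0, 0, 1] := by
  rw [Matrix.diagonal_vec3]
  ext i j
  fin_cases i <;> fin_cases j <;> simp <;> grind

theorem sub_conj_of_conj_eq_neg {F : Type*} [Field F] (c : F ≃+* F) (hc : ∀ a : F, c (c a) = a)
    (h2 : (2 : F) ≠ 0) {δ x y : F} (hδ : c δ = -δ) (hy : c y = -y) :
    let z := -δ * y + (2 : F)⁻¹ * δ * x * c x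
    z - c z = δ * x * c x := by
  simp only [map_add, map_mul, map_neg, map_inv₀, map_ofNat, hδ, hy, hc]
  linear_combination (δ * x * c x) * mul_inv_cancel₀ h2

/-- The Bruhat-type decomposition of `w · n · w⁻¹` used to analyze conjugation by the Weyl
element in the quasi-split unitary group in three variables.  Here `F` is a field of
characteristic `≠ 2`, `c` an involutive field automorphism of `F`, `δ, x, y ∈ F` with
`c δ = -δ`, `c y = -y`, and `z = -δ y + (1/2) δ x c(x) ≠ 0`. -/
theorem weyl_conjugation_bruhat_decomposition
    {F : Type*} [Field F] (c : F ≃+* F) (hc : ∀ a : F, c (c a) = a)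
    (h2 : (2 : F) ≠ 0)
    (δ x y : F) (hδ : c δ = -δ) (hy : c y = -y)
    (z : F) (hz : z = -δ * y + (2 : F)⁻¹ * δ * x * c x) (hz0 : z ≠ 0) :
    let w : Matrix (Fin 3) (Fin 3) F := !![0, 0, -1; 0, 1, 0; 1, 0, 0]
    let n : Matrix (Fin 3) (Fin 3) F := !![1, -δ * x, z; 0, 1, -(c x); 0, 0, 1]
    let u₁ : Matrix (Fin 3) (Fin 3) F :=
      !![1, -δ * x * (c z)⁻¹, -z⁻¹; 0, 1, -(c x) * z⁻¹; 0, 0, 1]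
    let d : Matrix (Fin 3) (Fin 3) F := Matrix.diagonal ![-(c z)⁻¹, z⁻¹ * c z, -z]
    let u₂ : Matrix (Fin 3) (Fin 3) F :=
      !![1, δ * x * z⁻¹, -z⁻¹; 0, 1, c x * (c z)⁻¹; 0, 0, 1]
    w * n * w⁻¹ = u₁ * d * w * u₂ := by
  intro w n u₁ d u₂
  have hzc : z - c z = δ * x * c x := hz ▸ sub_conj_of_conj_eq_neg c hc h2 hδ hy
  rw [show w⁻¹ = _ from inv_weylMatrix]
  exact (weylMatrix_conj_upper_unitriangular _ _ _).trans
    (lower_unitriangular_eq_bruhat δ x (c x) z (c z) hzc hz0 ((map_ne_zero c).mpr hz0))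
end

section
/- Let φ : ℂ³ → ℂ be a Schwartz function and let φ̂ denote its partial Fourier transform, φ̂(x; y₁, y₂) = ∫_ℂ φ(z, x, y₁) · exp(2πi(z·conj(y₂) + conj(z)·y₂)) dμ(z), where μ is twice the Lebesgue measure on ℂ. For u ∈ ℂ define φ_u : ℂ³ → ℂ by φ_u(x₁, x₂, x₃) = φ(x₁ - u·x₂ - (1/2)·u·conj(u)·x₃, x₂ + conj(u)·x₃, x₃). Then for all x, y₁, y₂ ∈ ℂ: (φ_u)̂(x; y₁, y₂) = exp(2πi·(w + conj(w))) · φ̂(x + conj(u)·y₁; y₁, y₂), where w = u·x·conj(y₂) + (1/2)·u·conj(u)·y₁·conj(y₂). -/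
open MeasureTheory ComplexConjugate

/-- The partial Fourier transform of a function `φ : ℂ³ → ℂ`:
`φ̂(x; y₁, y₂) = ∫ φ(z, x, y₁) · ψ_ℂ(z · conj y₂) dμ(z)`, where
`ψ_ℂ(w) = exp(2πi(w + conj w))` and `μ` is twice the Lebesgue measure on `ℂ`. -/
noncomputable def partialFT (φ : ℂ × ℂ × ℂ → ℂ) (x y₁ y₂ : ℂ) : ℂ :=
  ∫ z : ℂ, φ (z, x, y₁) *
      Complex.exp (2 * (Real.pi : ℂ) * Complex.I * (z * conj y₂ + conj z * y₂))
    ∂((2 : ENNReal) • (volume : Measure ℂ))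

/-- Formula (PF 2): the partial Fourier transform intertwines the substitution
`φ_u(x₁,x₂,x₃) = φ(x₁ - u x₂ - ½ u ū x₃, x₂ + ū x₃, x₃)` with multiplication by
`ψ_ℂ(u x ȳ₂ + ½ u ū y₁ ȳ₂)` and translation of the first variable by `ū y₁`. -/
theorem partialFT_unipotent (φ : SchwartzMap (ℂ × ℂ × ℂ) ℂ) (u : ℂ) (x y₁ y₂ : ℂ) :
    partialFT
        (fun p => φ (p.1 - u * p.2.1 - (1 / 2 : ℂ) * u * conj u * p.2.2,
          p.2.1 + conj u * p.2.2, p.2.2)) x y₁ y₂ =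
      Complex.exp (2 * (Real.pi : ℂ) * Complex.I *
          ((u * x * conj y₂ + (1 / 2 : ℂ) * u * conj u * y₁ * conj y₂) +
            conj (u * x * conj y₂ + (1 / 2 : ℂ) * u * conj u * y₁ * conj y₂))) *
        partialFT (⇑φ) (x + conj u * y₁) y₁ y₂ := by
  unfold partialFT
  set c : ℂ := u * x + (1 / 2 : ℂ) * u * conj u * y₁ with hc
  have key : (∫ z : ℂ,
      (fun p : ℂ × ℂ × ℂ => φ (p.1 - u * p.2.1 - (1 / 2 : ℂ) * u * conj u * p.2.2,
          p.2.1 + conj u * p.2.2, p.2.2)) (z, x, y₁) *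
        Complex.exp (2 * (Real.pi : ℂ) * Complex.I * (z * conj y₂ + conj z * y₂))
      ∂((2 : ENNReal) • (volume : Measure ℂ)))
      = ∫ z : ℂ,
        Complex.exp (2 * (Real.pi : ℂ) * Complex.I * (c * conj y₂ + conj c * y₂)) *
          (φ (z, x + conj u * y₁, y₁) *
            Complex.exp (2 * (Real.pi : ℂ) * Complex.I * (z * conj y₂ + conj z * y₂)))
      ∂((2 : ENNReal) • (volume : Measure ℂ)) := by
    rw [← integral_add_right_eq_self (μ := (2 : ENNReal) • (volume : Measure ℂ))
      (fun z : ℂ =>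
        Complex.exp (2 * (Real.pi : ℂ) * Complex.I * (c * conj y₂ + conj c * y₂)) *
          (φ (z, x + conj u * y₁, y₁) *
            Complex.exp (2 * (Real.pi : ℂ) * Complex.I * (z * conj y₂ + conj z * y₂)))) (-c)]
    congr 1
    ext z
    have h1 : z - u * x - (1 / 2 : ℂ) * u * conj u * y₁ = z + -c := by rw [hc]; ring
    simp only [map_add, map_neg, map_mul, Complex.conj_conj]
    rw [h1, show ∀ (a b d : ℂ), Complex.exp b * (a * Complex.exp d) = a * Complex.exp (b + d)
      from fun a b d => by rw [Complex.exp_add]; ring]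
    congr 2
    ring
  rw [key, integral_const_mul]
  congr 2
  simp only [hc, map_add, map_mul, Complex.conj_conj]
  ring
end

section
/- For every natural number n and all complex numbers w, v: ∫_ℂ (z - w)^n · exp(-2π|z|²) · exp(2πi(z·conj(v) + conj(z)·v)) dμ(z) = (i·v - w)^n · exp(-2π|v|²), where μ is twice the Lebesgue measure on ℂ and |z|² = z·conj(z). -/
/-!
Write `G_v(z) = e^{-2π|z|²} ψ_ℂ(z v̄)`. Its Wirtinger derivative is `∂̄G_v = -2π (z - i v) G_v`,
and `(z - w)ⁿ` is holomorphic, so integrating by parts gives `∫ (z - w)ⁿ (z - i v) G_v = 0`,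
i.e. `Iₙ₊₁ = (i v - w) Iₙ` for `Iₙ = ∫ (z - w)ⁿ G_v`. Finally `I₀` is the Fourier transform of a
Gaussian, `e^{-2π|v|²} / 2` for Lebesgue measure.
-/

open MeasureTheory ComplexConjugate Real
open Complex (I)

theorem integrable_one_add_norm_pow_mul_exp_neg_mul_sq_norm {V : Type*} [NormedAddCommGroup V]
    [InnerProductSpace ℝ V] [FiniteDimensional ℝ V] [MeasurableSpace V] [BorelSpace V]
    {b : ℝ} (hb : 0 < b) (k : ℕ) :
    Integrable fun x : V => (1 + ‖x‖) ^ k * rexp (-b * ‖x‖ ^ 2) := by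
  have hgauss : Integrable fun x : V => rexp (-(b / 2) * ‖x‖ ^ 2) := by
    have := (GaussianFourier.integrable_cexp_neg_mul_sq_norm_add (V := V)
      (b := ((b / 2 : ℝ) : ℂ)) (by simpa using hb) 0 0).norm
    simpa [Complex.norm_exp, ← Complex.ofReal_pow] using this
  refine (hgauss.const_mul (k.factorial * rexp (1 + 1 / (2 * b)))).mono' (by fun_prop)
    (ae_of_all _ fun x => ?_)
  have hpow : (1 + ‖x‖) ^ k ≤ k.factorial * rexp (1 + ‖x‖) := by
    have := Real.pow_div_factorial_le_exp (1 + ‖x‖) (by positivity) k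
    rwa [div_le_iff₀ (by positivity), mul_comm] at this
  have hquad : ‖x‖ ≤ 1 / (2 * b) + b / 2 * ‖x‖ ^ 2 := by
    have hsq : 0 ≤ (b * ‖x‖ - 1) ^ 2 / (2 * b) := by positivity
    have hexpand : (b * ‖x‖ - 1) ^ 2 / (2 * b) = 1 / (2 * b) + b / 2 * ‖x‖ ^ 2 - ‖x‖ := by
      field_simp; ring
    linarith
  rw [Real.norm_eq_abs, abs_of_nonneg (by positivity)]
  calc (1 + ‖x‖) ^ k * rexp (-b * ‖x‖ ^ 2)
      ≤ k.factorial * rexp (1 + ‖x‖) * rexp (-b * ‖x‖ ^ 2) := by gcongr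
    _ = k.factorial * rexp (1 + ‖x‖ + -b * ‖x‖ ^ 2) := by rw [mul_assoc, ← Real.exp_add]
    _ ≤ k.factorial * rexp (1 + 1 / (2 * b) + -(b / 2) * ‖x‖ ^ 2) := by
      gcongr ?_ * rexp ?_; linarith
    _ = _ := by rw [Real.exp_add]; ring

theorem norm_sub_pow_le (z w : ℂ) (m : ℕ) :
    ‖(z - w) ^ m‖ ≤ (1 + ‖w‖) ^ m * (1 + ‖z‖) ^ m := by
  rw [norm_pow, ← mul_pow]
  gcongr
  nlinarith [norm_sub_le z w, norm_nonneg z, norm_nonneg w]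

theorem norm_mul_add_mul_conj_add_le (α β γ z : ℂ) :
    ‖α * z + β * conj z + γ‖ ≤ (‖α‖ + ‖β‖ + ‖γ‖) * (1 + ‖z‖) := by
  calc ‖α * z + β * conj z + γ‖ ≤ ‖α‖ * ‖z‖ + ‖β‖ * ‖z‖ + ‖γ‖ := by
        refine (norm_add₃_le ..).trans ?_
        simp
    _ ≤ _ := by nlinarith [norm_nonneg α, norm_nonneg β, norm_nonneg γ, norm_nonneg z]

/-- The Wirtinger derivative `∂/∂z̄`. -/
noncomputable def dbar (g : ℂ → ℂ) (z : ℂ) : ℂ := (fderiv ℝ g z 1 + I * fderiv ℝ g z I) / 2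

theorem integral_mul_dbar_eq_zero {μ : Measure ℂ} [μ.IsAddHaarMeasure] {f g : ℂ → ℂ}
    (hf : Differentiable ℂ f) (hg : Differentiable ℝ g)
    (hf'g : Integrable (fun z => deriv f z * g z) μ) (hfg : Integrable (fun z => f z * g z) μ)
    (hfg' : ∀ u, Integrable (fun z => f z * fderiv ℝ g z u) μ) :
    ∫ z, f z * dbar g z ∂μ = 0 := by
  have hfderiv (z u : ℂ) : fderiv ℝ f z u = u * deriv f z := by
    rw [((hf z).hasDerivAt.hasFDerivAt.restrictScalars ℝ).fderiv]
    simp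
  have hibp (u : ℂ) : ∫ z, f z * fderiv ℝ g z u ∂μ = -(u * ∫ z, deriv f z * g z ∂μ) := by
    rw [integral_mul_fderiv_eq_neg_fderiv_mul_of_integrable
      (by simpa only [hfderiv, mul_assoc] using hf'g.const_mul u) (hfg' u) hfg
      (fun z _ => (hf z).restrictScalars ℝ) (fun z _ => hg z)]
    simp only [hfderiv, mul_assoc, integral_const_mul]
  calc ∫ z, f z * dbar g z ∂μ
      = ((∫ z, f z * fderiv ℝ g z 1 ∂μ) + I * ∫ z, f z * fderiv ℝ g z I ∂μ) / 2 := by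
        rw [← integral_const_mul, ← integral_add (hfg' 1) ((hfg' I).const_mul I), ← integral_div]
        congr 1 with z
        rw [dbar]
        ring
    _ = 0 := by
        rw [hibp, hibp]
        linear_combination (-(∫ z, deriv f z * g z ∂μ) / 2) * Complex.I_sq

/-- `e^{-2π|z|²} ψ_ℂ(z v̄)` with `ψ_ℂ(w) = e^{2πi(w + w̄)}`. -/
noncomputable def gaussianCharacter (v z : ℂ) : ℂ :=
  Complex.exp (-(2 * π) * (z * conj z) + 2 * π * I * (z * conj v + conj z * v))

theorem gaussianCharacter_eq_exp_inner (v z : ℂ) : gaussianCharacter v z =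
    Complex.exp (-(2 * π : ℂ) * ‖z‖ ^ 2 + (4 * π * I) * inner ℝ v z) := by
  have hre : z * conj v + conj z * v = 2 * (z * conj v).re := by
    rw [show conj z * v = conj (z * conj v) by simp, Complex.add_conj, Complex.ofReal_mul,
      Complex.ofReal_ofNat]
  rw [gaussianCharacter, Complex.inner, Complex.mul_conj', hre]
  ring_nf

theorem continuous_gaussianCharacter (v : ℂ) : Continuous (gaussianCharacter v) := by
  unfold gaussianCharacter; fun_prop

theorem norm_gaussianCharacter (v z : ℂ) :
    ‖gaussianCharacter v z‖ = rexp (-(2 * π) * ‖z‖ ^ 2) := by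
  rw [gaussianCharacter_eq_exp_inner, Complex.norm_exp]
  congr 1
  simp [← Complex.ofReal_pow]

theorem integral_gaussianCharacter (v : ℂ) :
    ∫ z, gaussianCharacter v z = Complex.exp (-(2 * π) * (v * conj v)) / 2 := by
  simp_rw [gaussianCharacter_eq_exp_inner]
  rw [GaussianFourier.integral_cexp_neg_mul_sq_norm_add (by simp [pi_pos]),
    Complex.finrank_real_complex, Complex.mul_conj']
  have hπ : (π : ℂ) ≠ 0 := Complex.ofReal_ne_zero.mpr pi_ne_zero
  have hexp : (4 * π * I : ℂ) ^ 2 * ‖v‖ ^ 2 / (4 * (2 * π)) = -(2 * π) * ‖v‖ ^ 2 := by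
    rw [mul_pow, Complex.I_sq]; field_simp; ring
  have hhalf : (π / (2 * π) : ℂ) = 2⁻¹ := by field_simp
  rw [hexp, hhalf]
  norm_num
  ring

theorem fderiv_gaussianCharacter_apply (v z u : ℂ) :
    fderiv ℝ (gaussianCharacter v) z u =
      (-(2 * π) * conj u * z + -(2 * π) * u * conj z + 2 * π * I * (u * conj v + conj u * v)) *
        gaussianCharacter v z := by
  have hid := hasFDerivAt_id (𝕜 := ℝ) z
  have hconj := (Complex.conjCLE : ℂ →L[ℝ] ℂ).hasFDerivAt (x := z)
  have h : HasFDerivAt (gaussianCharacter v) _ z :=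
    (((hid.mul hconj).const_mul (-(2 * π : ℂ))).add
      (((hid.mul_const (conj v)).add (hconj.mul_const v)).const_mul (2 * π * I : ℂ))).cexp
  rw [h.fderiv]
  simp [gaussianCharacter]
  ring

theorem dbar_gaussianCharacter (v z : ℂ) :
    dbar (gaussianCharacter v) z = -(2 * π) * (z - I * v) * gaussianCharacter v z := by
  rw [dbar, fderiv_gaussianCharacter_apply, fderiv_gaussianCharacter_apply, Complex.conj_I,
    map_one]
  linear_combination (π * (z - conj z) + π * I * (conj v - v)) *
    gaussianCharacter v z * Complex.I_sq

theorem integrable_mul_gaussianCharacter (v : ℂ) {h : ℂ → ℂ} (hh : Continuous h) {C : ℝ} {k : ℕ}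
    (hC : ∀ z, ‖h z‖ ≤ C * (1 + ‖z‖) ^ k) :
    Integrable fun z => h z * gaussianCharacter v z :=
  ((integrable_one_add_norm_pow_mul_exp_neg_mul_sq_norm two_pi_pos k).const_mul C).mono'
    (hh.mul (continuous_gaussianCharacter v)).aestronglyMeasurable <| ae_of_all _ fun z => by
      rw [norm_mul, norm_gaussianCharacter, ← mul_assoc]
      gcongr
      exact hC z

theorem integrable_sub_pow_mul_gaussianCharacter (w v : ℂ) (m : ℕ) :
    Integrable fun z => (z - w) ^ m * gaussianCharacter v z :=
  integrable_mul_gaussianCharacter v (by fun_prop) (norm_sub_pow_le · w m)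

theorem integrable_sub_pow_mul_fderiv_gaussianCharacter (w v u : ℂ) (m : ℕ) :
    Integrable fun z => (z - w) ^ m * fderiv ℝ (gaussianCharacter v) z u := by
  simp_rw [fderiv_gaussianCharacter_apply, ← mul_assoc]
  set γ : ℂ := 2 * π * I * (u * conj v + conj u * v)
  refine integrable_mul_gaussianCharacter v (k := m + 1)
    (C := (1 + ‖w‖) ^ m * (‖-(2 * π) * conj u‖ + ‖-(2 * π) * u‖ + ‖γ‖)) (by fun_prop) fun z => ?_
  calc _ ≤ (1 + ‖w‖) ^ m * (1 + ‖z‖) ^ m *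
        ((‖-(2 * π) * conj u‖ + ‖-(2 * π) * u‖ + ‖γ‖) * (1 + ‖z‖)) := by
        rw [norm_mul]
        exact mul_le_mul (norm_sub_pow_le z w m) (norm_mul_add_mul_conj_add_le ..)
          (norm_nonneg _) (by positivity)
    _ = _ := by ring

theorem integrable_sub_pow_mul_dbar_gaussianCharacter (w v : ℂ) (m : ℕ) :
    Integrable fun z => (z - w) ^ m * dbar (gaussianCharacter v) z := by
  refine (((integrable_sub_pow_mul_fderiv_gaussianCharacter w v 1 m).add
    ((integrable_sub_pow_mul_fderiv_gaussianCharacter w v I m).const_mul I)).div_const 2).congr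
    (ae_of_all _ fun z => ?_)
  simp only [dbar, Pi.add_apply]
  ring

theorem integral_sub_pow_mul_dbar_gaussianCharacter (n : ℕ) (w v : ℂ) :
    ∫ z, (z - w) ^ n * dbar (gaussianCharacter v) z = 0 := by
  have hderiv : deriv (fun z : ℂ => (z - w) ^ n) = fun z => n * (z - w) ^ (n - 1) := by
    funext z; simp
  refine integral_mul_dbar_eq_zero (by fun_prop) (by unfold gaussianCharacter; fun_prop) ?_
    (integrable_sub_pow_mul_gaussianCharacter w v n)
    (integrable_sub_pow_mul_fderiv_gaussianCharacter w v · n)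
  simpa only [hderiv, mul_assoc] using
    (integrable_sub_pow_mul_gaussianCharacter w v (n - 1)).const_mul (n : ℂ)

theorem integral_sub_pow_succ_mul_gaussianCharacter (n : ℕ) (w v : ℂ) :
    ∫ z, (z - w) ^ (n + 1) * gaussianCharacter v z =
      (I * v - w) * ∫ z, (z - w) ^ n * gaussianCharacter v z := by
  have hsplit (z : ℂ) : (z - w) ^ (n + 1) * gaussianCharacter v z =
      (I * v - w) * ((z - w) ^ n * gaussianCharacter v z) -
        (2 * π : ℂ)⁻¹ * ((z - w) ^ n * dbar (gaussianCharacter v) z) := by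
    rw [dbar_gaussianCharacter]
    field_simp
    ring
  simp_rw [hsplit]
  rw [integral_sub ((integrable_sub_pow_mul_gaussianCharacter w v n).const_mul _)
    ((integrable_sub_pow_mul_dbar_gaussianCharacter w v n).const_mul _), integral_const_mul,
    integral_const_mul, integral_sub_pow_mul_dbar_gaussianCharacter, mul_zero, sub_zero]

theorem integral_sub_pow_mul_gaussianCharacter (n : ℕ) (w v : ℂ) :
    ∫ z, (z - w) ^ n * gaussianCharacter v z =
      (I * v - w) ^ n * (Complex.exp (-(2 * π) * (v * conj v)) / 2) := by
  induction n with
  | zero => simp [integral_gaussianCharacter]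
  | succ n ih => rw [integral_sub_pow_succ_mul_gaussianCharacter, ih, pow_succ']; ring

/-- Fourier-transform identity for a holomorphic-polynomial-times-Gaussian function on `ℂ`:
`∫ (z - w)ⁿ e^{-2π|z|²} ψ_ℂ(z v̄) dμ(z) = (i v - w)ⁿ e^{-2π|v|²}`, where
`ψ_ℂ(w) = exp(2πi(w + conj w))`, `μ` is twice the Lebesgue measure on `ℂ`, and
`|z|² = z · conj z`. -/
theorem gaussian_polynomial_fourier (n : ℕ) (w v : ℂ) :
    (∫ z : ℂ, (z - w) ^ n * Complex.exp (-(2 * (Real.pi : ℂ)) * (z * conj z)) *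
        Complex.exp (2 * (Real.pi : ℂ) * Complex.I * (z * conj v + conj z * v))
      ∂((2 : ENNReal) • (volume : Measure ℂ))) =
      (Complex.I * v - w) ^ n * Complex.exp (-(2 * (Real.pi : ℂ)) * (v * conj v)) := by
  have hG : (fun z : ℂ => (z - w) ^ n * Complex.exp (-(2 * (π : ℂ)) * (z * conj z)) *
      Complex.exp (2 * (π : ℂ) * I * (z * conj v + conj z * v))) =
      fun z => (z - w) ^ n * gaussianCharacter v z := by
    funext z
    rw [mul_assoc, gaussianCharacter, Complex.exp_add]
  rw [hG, integral_smul_measure, integral_sub_pow_mul_gaussianCharacter, ENNReal.toReal_ofNat,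
    Complex.real_smul]
  push_cast
  ring
end

section
/- For every integer n ≥ 2: ∫_{-∞}^{∞} exp(-4πi·x) / (x + i)^n dx = (-4πi)^n · e^{-4π} / (2·(n-1)!), where (x + i)^n is the n-th power of the complex number x + i. -/
/-!
Let `g(t) = (-2πi)ⁿ / (n-1)! · tⁿ⁻¹ e^{-2πt}` for `t > 0` and `g(t) = 0` for `t ≤ 0`. The Gamma
integral `∫₀^∞ tᵏ e^{-ct} dt = k! / cᵏ⁺¹`, valid for every complex `c` with `Re c > 0`, shows that
the inverse Fourier transform of `g` is `x ↦ (x + i)⁻ⁿ`. For `n ≥ 2` this function is integrable, so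
Fourier inversion identifies its Fourier transform at any `ξ > 0` with `g(ξ)`; take `ξ = 2`.
-/

open MeasureTheory Set Filter Complex FourierTransform
open scoped Topology Real Nat

lemma fourierInv_const_smul {V E : Type*} [NormedAddCommGroup V] [InnerProductSpace ℝ V]
    [MeasurableSpace V] [BorelSpace V] [FiniteDimensional ℝ V] [NormedAddCommGroup E]
    [NormedSpace ℂ E] (r : ℂ) (f : V → E) : 𝓕⁻ (r • f) = r • 𝓕⁻ f :=
  VectorFourier.fourierIntegral_const_smul _ _ _ f r

section OneSidedGamma

variable {c : ℂ}

lemma norm_ofReal_pow_mul_cexp_neg_mul (k : ℕ) {t : ℝ} (ht : 0 ≤ t) :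
    ‖(t : ℂ) ^ k * cexp (-(c * t))‖ = t ^ k * Real.exp (-c.re * t) := by
  rw [norm_mul, norm_exp, norm_pow, norm_real, Real.norm_of_nonneg ht]
  simp [Complex.mul_re]

lemma integrableOn_ofReal_pow_mul_cexp_neg_mul_Ioi (hc : 0 < c.re) (k : ℕ) :
    IntegrableOn (fun t : ℝ ↦ (t : ℂ) ^ k * cexp (-(c * t))) (Ioi 0) := by
  have hreal : IntegrableOn (fun t : ℝ ↦ t ^ (k : ℝ) * Real.exp (-c.re * t ^ (1 : ℝ))) (Ioi 0) :=
    integrableOn_rpow_mul_exp_neg_mul_rpow (by linarith [k.cast_nonneg (α := ℝ)]) one_pos hc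
  refine hreal.mono' (by fun_prop) ?_
  filter_upwards [ae_restrict_mem measurableSet_Ioi] with t ht
  rw [norm_ofReal_pow_mul_cexp_neg_mul k (le_of_lt ht), Real.rpow_natCast, Real.rpow_one]

lemma tendsto_ofReal_pow_mul_cexp_neg_mul_atTop (hc : 0 < c.re) (k : ℕ) :
    Tendsto (fun t : ℝ ↦ (t : ℂ) ^ k * cexp (-(c * t))) atTop (𝓝 0) := by
  refine squeeze_zero_norm' ?_ (tendsto_rpow_mul_exp_neg_mul_atTop_nhds_zero k _ hc)
  filter_upwards [eventually_ge_atTop 0] with t ht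
  rw [norm_ofReal_pow_mul_cexp_neg_mul k ht, Real.rpow_natCast]

lemma integral_cexp_neg_mul_Ioi (hc : 0 < c.re) :
    ∫ t : ℝ in Ioi 0, cexp (-(c * t)) = 1 / c := by
  simpa [neg_mul, div_neg, neg_div, one_div] using
    integral_exp_mul_complex_Ioi (a := -c) (by simpa) 0

lemma hasDerivAt_ofReal_pow_succ_mul_cexp_neg_mul (k : ℕ) (t : ℝ) :
    HasDerivAt (fun t : ℝ ↦ (t : ℂ) ^ (k + 1) * cexp (-(c * t)))
      ((k + 1) * ((t : ℂ) ^ k * cexp (-(c * t))) - c * ((t : ℂ) ^ (k + 1) * cexp (-(c * t)))) t := by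
  have hpow := (hasDerivAt_pow (k + 1) (t : ℂ)).comp_ofReal
  have hlin : HasDerivAt (fun t : ℝ ↦ -(c * t)) (-c) t := by
    simpa using ((hasDerivAt_id (t : ℂ)).const_mul c).neg.comp_ofReal
  refine (hpow.mul hlin.cexp).congr_deriv ?_
  push_cast
  ring

lemma mul_integral_ofReal_pow_succ_mul_cexp_neg_mul_Ioi (hc : 0 < c.re) (k : ℕ) :
    c * ∫ t : ℝ in Ioi 0, (t : ℂ) ^ (k + 1) * cexp (-(c * t)) =
      (k + 1) * ∫ t : ℝ in Ioi 0, (t : ℂ) ^ k * cexp (-(c * t)) := by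
  have hint := integrableOn_ofReal_pow_mul_cexp_neg_mul_Ioi hc
  have hftc := integral_Ioi_of_hasDerivAt_of_tendsto'
    (fun t _ ↦ hasDerivAt_ofReal_pow_succ_mul_cexp_neg_mul k t)
    (((hint k).const_mul _).sub ((hint (k + 1)).const_mul _))
    (tendsto_ofReal_pow_mul_cexp_neg_mul_atTop hc (k + 1))
  rw [integral_sub ((hint k).const_mul _) ((hint (k + 1)).const_mul _),
    integral_const_mul, integral_const_mul] at hftc
  rw [ofReal_zero, zero_pow k.succ_ne_zero, zero_mul, sub_zero] at hftc
  linear_combination -hftc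

lemma integral_ofReal_pow_mul_cexp_neg_mul_Ioi (hc : 0 < c.re) (k : ℕ) :
    ∫ t : ℝ in Ioi 0, (t : ℂ) ^ k * cexp (-(c * t)) = k ! / c ^ (k + 1) := by
  have hc0 : c ≠ 0 := by rintro rfl; simp at hc
  induction k with
  | zero => simpa using integral_cexp_neg_mul_Ioi hc
  | succ k ih =>
    have hrec := mul_integral_ofReal_pow_succ_mul_cexp_neg_mul_Ioi hc k
    rw [ih] at hrec
    rw [Nat.factorial_succ, Nat.cast_mul, eq_div_iff (pow_ne_zero _ hc0)]
    rw [mul_div_assoc', eq_div_iff (pow_ne_zero _ hc0)] at hrec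
    push_cast
    linear_combination hrec


lemma fourier_indicator_Ioi_ofReal_pow_mul_cexp_neg_mul (hc : 0 < c.re) (k : ℕ) (w : ℝ) :
    𝓕 ((Ioi 0).indicator fun t : ℝ ↦ (t : ℂ) ^ k * cexp (-(c * t))) w =
      k ! / (c + 2 * π * I * w) ^ (k + 1) := by
  have hre : 0 < (c + 2 * π * I * w).re := by simpa [Complex.mul_re] using hc
  rw [← integral_ofReal_pow_mul_cexp_neg_mul_Ioi hre k, ← integral_indicator measurableSet_Ioi,
    Real.fourier_real_eq_integral_exp_smul]
  refine integral_congr_ae (.of_forall fun t ↦ ?_)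
  by_cases ht : t ∈ Ioi 0
  · simp only [indicator_of_mem ht, smul_eq_mul]
    rw [mul_left_comm, ← exp_add]
    push_cast
    ring_nf
  · simp [indicator_of_notMem ht]

end OneSidedGamma

lemma integrable_inv_ofReal_add_I_pow {n : ℕ} (hn : 2 ≤ n) :
    Integrable fun x : ℝ ↦ (((x : ℂ) + I) ^ n)⁻¹ := by
  refine integrable_inv_one_add_sq.mono' (by fun_prop) (.of_forall fun x ↦ ?_)
  have hsq : ‖(x : ℂ) + I‖ ^ 2 = 1 + x ^ 2 := by
    rw [Complex.sq_norm]
    simp only [normSq_apply, add_re, ofReal_re, I_re, add_zero, add_im, ofReal_im, I_im,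
      zero_add, mul_one]
    ring
  have hone : 1 ≤ ‖(x : ℂ) + I‖ := by simpa using abs_im_le_norm ((x : ℂ) + I)
  rw [norm_inv, norm_pow, ← hsq]
  exact inv_anti₀ (by positivity) (pow_le_pow_right₀ hone hn)

lemma fourier_inv_ofReal_add_I_pow {n : ℕ} (hn : 2 ≤ n) {ξ : ℝ} (hξ : 0 < ξ) :
    𝓕 (fun x : ℝ ↦ (((x : ℂ) + I) ^ n)⁻¹) ξ =
      (-2 * π * I) ^ n / (n - 1)! * (ξ ^ (n - 1) * cexp (-(2 * π * ξ))) := by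
  set h : ℝ → ℂ := fun t ↦ (t : ℂ) ^ (n - 1) * cexp (-(2 * π * t))
  set g : ℝ → ℂ := ((-2 * π * I) ^ n / (n - 1)! : ℂ) • (Ioi 0).indicator h
  have hc : 0 < (2 * π : ℂ).re := by simpa using Real.pi_pos
  have hg : 𝓕⁻ g = fun x : ℝ ↦ (((x : ℂ) + I) ^ n)⁻¹ := by
    ext x
    rw [fourierInv_const_smul, Pi.smul_apply, Real.fourierInv_eq_fourier_neg,
      fourier_indicator_Ioi_ofReal_pow_mul_cexp_neg_mul hc, Nat.sub_add_cancel (by omega)]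
    have hfac : ((n - 1)! : ℂ) ≠ 0 := Nat.cast_ne_zero.2 (Nat.factorial_ne_zero _)
    have hxI : (x : ℂ) + I ≠ 0 := fun h0 ↦ by simpa using congrArg im h0
    have hbase : (2 * π : ℂ) + 2 * π * I * (-x : ℝ) = -2 * π * I * (x + I) := by
      push_cast
      linear_combination 2 * π * I_sq
    rw [hbase, smul_eq_mul, mul_pow (-2 * π * I : ℂ)]
    field_simp
  have hFg_int : Integrable (𝓕 g) := by
    have hFg : 𝓕 g = fun x ↦ 𝓕⁻ g (-x) :=
      funext fun x ↦ by rw [Real.fourierInv_eq_fourier_neg, neg_neg]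
    rw [hFg, hg]
    exact (integrable_inv_ofReal_add_I_pow hn).comp_neg
  have hg_int : Integrable g :=
    ((integrableOn_ofReal_pow_mul_cexp_neg_mul_Ioi hc _).integrable_indicator
      measurableSet_Ioi).smul _
  have hg_cont : ContinuousAt g ξ := by
    have hcont : Continuous fun t ↦ ((-2 * π * I) ^ n / (n - 1)! : ℂ) * h t := by fun_prop
    refine hcont.continuousAt.congr ?_
    filter_upwards [Ioi_mem_nhds hξ] with t ht
    simp [g, indicator_of_mem ht]
  calc 𝓕 (fun x : ℝ ↦ (((x : ℂ) + I) ^ n)⁻¹) ξ = 𝓕 (𝓕⁻ g) ξ := by rw [hg]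
    _ = g ξ := hg_int.fourier_fourierInv_eq hFg_int hg_cont
    _ = _ := by simp [g, h, indicator_of_mem (mem_Ioi.2 hξ)]

/-- For `n ≥ 2`:
`∫_ℝ exp(-4πi x) / (x + i)ⁿ dx = (-4πi)ⁿ e^{-4π} / (2 (n-1)!)`. -/
theorem integral_exp_div_pow_add_I (n : ℕ) (hn : 2 ≤ n) :
    (∫ x : ℝ, Complex.exp (-(4 * (Real.pi : ℂ)) * Complex.I * (x : ℂ)) /
        ((x : ℂ) + Complex.I) ^ n) =
      (-(4 * (Real.pi : ℂ)) * Complex.I) ^ n * Complex.exp (-(4 * (Real.pi : ℂ))) /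
        (2 * (Nat.factorial (n - 1) : ℂ)) := by
  have hfourier := fourier_inv_ofReal_add_I_pow hn two_pos
  rw [Real.fourier_real_eq_integral_exp_smul] at hfourier
  convert hfourier using 1
  · refine integral_congr_ae (.of_forall fun x ↦ ?_)
    simp only [smul_eq_mul, div_eq_mul_inv]
    push_cast
    ring_nf
  · obtain ⟨m, rfl⟩ : ∃ m, n = m + 1 := ⟨n - 1, by omega⟩
    have hpow : (-(4 * π) * I : ℂ) ^ (m + 1) = (-2 * π * I) ^ (m + 1) * 2 ^ m * 2 := by
      rw [mul_assoc, ← pow_succ, ← mul_pow]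
      ring_nf
    rw [hpow, Nat.add_sub_cancel]
    push_cast
    ring_nf
end
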